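/- Let $a,b,c,d,e>0$ and $f(s,t)=\frac{(as+bt)^2}{cs^2+2dst+et^2}$ for $(s,t)$ with $s,t\ge 0$, $(s,t)\ne (0,0)$. If the minimum of $f$ over this set is attained only at points with $s>0$ and $t>0$, then $ad-bc>0$ and $bd-ae>0$. -/
import Mathlib


/-- converse direction. If the minimum of
`f(s,t) = (as+bt)²/(cs²+2dst+et²)` over `{s,t ≥ 0, (s,t) ≠ (0,0)}` is attained, and
every minimizer satisfies `s > 0` and `t > 0`, then `ad - bc > 0` and `bd - ae > 0`. -/
theorem stmt_3 (a b c d e : ℝ) (ha : 0 < a) (hb : 0 < b) (hc : 0 < c) (hd : 0 < d)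
    (he : 0 < e)
    (f : ℝ → ℝ → ℝ)
    (hf : ∀ s t, f s t = (a * s + b * t) ^ 2 / (c * s ^ 2 + 2 * d * s * t + e * t ^ 2))
    (hattained : ∃ s₀ t₀ : ℝ, 0 ≤ s₀ ∧ 0 ≤ t₀ ∧ (s₀, t₀) ≠ (0, 0) ∧
      ∀ s t : ℝ, 0 ≤ s → 0 ≤ t → (s, t) ≠ (0, 0) → f s₀ t₀ ≤ f s t)
    (honly_interior : ∀ s₀ t₀ : ℝ, 0 ≤ s₀ → 0 ≤ t₀ → (s₀, t₀) ≠ (0, 0) →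
      (∀ s t : ℝ, 0 ≤ s → 0 ≤ t → (s, t) ≠ (0, 0) → f s₀ t₀ ≤ f s t) →
      0 < s₀ ∧ 0 < t₀) :
    0 < a * d - b * c ∧ 0 < b * d - a * e := by
  by_contra hcon
  rw [not_and_or] at hcon
  push_neg at hcon
  -- denominator positivity
  have hden : ∀ s t : ℝ, 0 ≤ s → 0 ≤ t → (s, t) ≠ (0, 0) →
      0 < c * s ^ 2 + 2 * d * s * t + e * t ^ 2 := by
    intro s t hs ht hne
    have h : s ≠ 0 ∨ t ≠ 0 := by
      by_contra h
      push_neg at h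
      exact hne (by simp [h.1, h.2])
    rcases h with h | h
    · have hs0 : 0 < s := lt_of_le_of_ne hs (Ne.symm h)
      positivity
    · have ht0 : 0 < t := lt_of_le_of_ne ht (Ne.symm h)
      positivity
  by_cases hcase : a ^ 2 * e ≤ b ^ 2 * c
  · -- then (1,0) is a minimizer
    have had : a * d ≤ b * c := by
      rcases hcon with h | h
      · linarith
      · nlinarith [mul_le_mul_of_nonneg_left h ha.le, mul_pos ha hb]
    have hmin : ∀ s t : ℝ, 0 ≤ s → 0 ≤ t → (s, t) ≠ (0, 0) → f 1 0 ≤ f s t := by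
      intro s t hs ht hne
      rw [hf, hf]
      have hD := hden s t hs ht hne
      have h10 : (a * 1 + b * 0) ^ 2 / (c * 1 ^ 2 + 2 * d * 1 * 0 + e * 0 ^ 2)
          = a ^ 2 / c := by ring_nf
      rw [h10, div_le_div_iff₀ hc hD]
      nlinarith [mul_nonneg (mul_nonneg hs ht) (mul_nonneg ha.le (sub_nonneg.2 had)),
        mul_nonneg (mul_nonneg ht ht) (sub_nonneg.2 hcase)]
    have := (honly_interior 1 0 (by norm_num) le_rfl (by norm_num) hmin).2
    exact lt_irrefl 0 this
  · push_neg at hcase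
    have hbd : b * d ≤ a * e := by
      rcases hcon with h | h
      · nlinarith [mul_le_mul_of_nonneg_left h hb.le, mul_pos ha hb]
      · linarith
    have hmin : ∀ s t : ℝ, 0 ≤ s → 0 ≤ t → (s, t) ≠ (0, 0) → f 0 1 ≤ f s t := by
      intro s t hs ht hne
      rw [hf, hf]
      have hD := hden s t hs ht hne
      have h01 : (a * 0 + b * 1) ^ 2 / (c * 0 ^ 2 + 2 * d * 0 * 1 + e * 1 ^ 2)
          = b ^ 2 / e := by ring_nf
      rw [h01, div_le_div_iff₀ he hD]
      nlinarith [mul_nonneg (mul_nonneg hs ht) (mul_nonneg hb.le (sub_nonneg.2 hbd)),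
        mul_nonneg (mul_nonneg hs hs) (sub_nonneg.2 hcase.le)]
    have := (honly_interior 0 1 le_rfl (by norm_num) (by norm_num) hmin).1
    exact lt_irrefl 0 this
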